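/- Let (R, m) be a Noetherian local ring, I ⊆ R an ideal, and x ∈ m such that x is a regular element of R and (I^{n+1} : x) = I^n(I : x) + (0 :_R x) for all n ≥ 0 and also ∪_{s>0}(I^{n+1} : m^s) = I^{n+1} : x for all n ≥ 0. Then ℓ_R(H^0_m(R/I^{n+1})) = ℓ_R((I:x)^{n+1}/I^{n+1}) for all n ≥ 0. -/

import Mathlib

open IsLocalRing

/-- The zeroth local cohomology `H^0_I(M) = ⋃_{s>0} (0 :_M I^s)`, as a submodule. -/
def H0 {R : Type*} [CommRing R] (I : Ideal R) (M : Type*) [AddCommGroup M]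
    [Module R M] : Submodule R M :=
  ⨆ s : ℕ, Submodule.torsionBySet R M ((I ^ (s + 1) : Ideal R) : Set R)

/-- The length of a module, as the Krull dimension of its lattice of submodules. -/
noncomputable def moduleLength (R : Type*) [CommRing R] (M : Type*) [AddCommGroup M]
    [Module R M] : ℕ∞ :=
  (Order.krullDim (Submodule R M)).unbotD 0

/-!
Since `x` is regular, `(0 : x) = 0` and the first hypothesis reads `(I^(n+1) : x) = I^n (I : x)`.
The second one says that `K : x` is the saturation `K : m^∞` for `K = I^(n+1)`. By Noetherianity
`K : m^∞ = K : m^t` for some `t`, so it is closed under `(- : m^t)`; as colons commute, `K : x`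
is then closed under `(- : x)`. Hence `(I : x)^(n+2) = (I^(n+1) : x)(I : x)` lies in
`I^(n+2) : x`, and by induction `(I : x)^(n+1) = I^(n+1) : x = I^(n+1) : m^∞`. Finally
`H^0_m(R/K)` is the image of `K : m^∞` in `R/K`, that is `(K : m^∞)/K`.
-/

namespace Ideal

variable {R : Type*} [CommRing R]

/-- The saturation `K : m^∞`. -/
def saturation (K m : Ideal R) : Ideal R :=
  ⨆ s : ℕ, K.colon ((m ^ (s + 1) : Ideal R) : Set R)

theorem colon_mul (K J L : Ideal R) :
    K.colon ((J * L : Ideal R) : Set R) = (K.colon (J : Set R)).colon (L : Set R) := by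
  ext r
  simp only [Submodule.mem_colon, SetLike.mem_coe, smul_eq_mul]
  constructor
  · intro h l hl j hj
    simpa only [mul_comm j l, mul_assoc] using h _ (mul_mem_mul hj hl)
  · intro h z hz
    refine Submodule.mul_induction_on hz (fun j hj l hl ↦ ?_) (fun a b ha hb ↦ ?_)
    · simpa only [mul_comm j l, mul_assoc] using h l hl j hj
    · simpa only [mul_add] using K.add_mem ha hb

theorem exists_saturation_eq_colon_pow [IsNoetherianRing R] (K m : Ideal R) :
    ∃ t : ℕ, K.saturation m = K.colon ((m ^ (t + 1) : Ideal R) : Set R) := by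
  let f : ℕ →o Ideal R :=
    ⟨fun s ↦ K.colon ((m ^ (s + 1) : Ideal R) : Set R),
      fun _ _ hst ↦ Submodule.colon_mono le_rfl (Ideal.pow_le_pow_right (by omega))⟩
  exact ⟨_, WellFoundedGT.iSup_eq_monotonicSequenceLimit f⟩

theorem saturation_colon_pow [IsNoetherianRing R] (K m : Ideal R) (k : ℕ) :
    (K.saturation m).colon ((m ^ (k + 1) : Ideal R) : Set R) = K.saturation m := by
  refine le_antisymm ?_ le_colon
  obtain ⟨t, ht⟩ := exists_saturation_eq_colon_pow K m
  calc (K.saturation m).colon ((m ^ (k + 1) : Ideal R) : Set R)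
      = K.colon ((m ^ (t + 1) * m ^ (k + 1) : Ideal R) : Set R) := by rw [ht, colon_mul]
    _ = K.colon ((m ^ (t + k + 1 + 1) : Ideal R) : Set R) := by rw [← pow_add]; ring_nf
    _ ≤ K.saturation m := le_iSup (fun s ↦ K.colon ((m ^ (s + 1) : Ideal R) : Set R)) _

theorem colon_span_singleton_colon_of_saturation_eq [IsNoetherianRing R] {K m : Ideal R}
    {x : R} (h : K.saturation m = K.colon (span {x} : Set R)) :
    (K.colon (span {x} : Set R)).colon (span {x} : Set R) = K.colon (span {x} : Set R) := by
  obtain ⟨t, ht⟩ := exists_saturation_eq_colon_pow K m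
  calc (K.colon (span {x} : Set R)).colon (span {x} : Set R)
      = (K.colon ((m ^ (t + 1) : Ideal R) : Set R)).colon (span {x} : Set R) := by rw [← h, ht]
    _ = (K.colon (span {x} : Set R)).colon ((m ^ (t + 1) : Ideal R) : Set R) := by
        rw [← colon_mul, ← colon_mul, mul_comm]
    _ = K.colon (span {x} : Set R) := by rw [← h, saturation_colon_pow]

theorem bot_colon_span_singleton_of_mem_nonZeroDivisors {x : R} (hx : x ∈ nonZeroDivisors R) :
    (⊥ : Ideal R).colon (span {x} : Set R) = ⊥ := by
  ext a
  simp only [mem_colon_span_singleton, mem_bot]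
  exact ⟨hx.2 a, fun ha ↦ by rw [ha, zero_mul]⟩

theorem colon_span_singleton_pow_eq_pow_colon {I : Ideal R} {x : R}
    (hcolon : ∀ n : ℕ, (I ^ (n + 1)).colon (span {x} : Set R) = I ^ n * I.colon (span {x}))
    (hclosed : ∀ n : ℕ, ((I ^ (n + 1)).colon (span {x} : Set R)).colon (span {x} : Set R) =
      (I ^ (n + 1)).colon (span {x} : Set R)) (n : ℕ) :
    I.colon (span {x} : Set R) ^ (n + 1) = (I ^ (n + 1)).colon (span {x} : Set R) := by
  induction n with
  | zero => rw [pow_one, pow_one]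
  | succ n ih =>
    apply le_antisymm
    · rw [pow_succ, ih, ← hclosed (n + 1), mul_le]
      intro a ha b hb
      simp only [mem_colon_span_singleton] at ha hb ⊢
      convert mul_mem_mul ha hb using 1 <;> ring
    · rw [hcolon, pow_succ, pow_succ]
      exact mul_mono_left (ih ▸ le_colon)

end Ideal

theorem map_mkQ_colon_eq_torsionBySet {R : Type*} [CommRing R] (K J : Ideal R) :
    Submodule.map K.mkQ (K.colon (J : Set R)) = Submodule.torsionBySet R (R ⧸ K) (J : Set R) := by
  ext y
  rw [Submodule.mem_torsionBySet_iff, Submodule.mem_map]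
  constructor
  · rintro ⟨r, hr, rfl⟩ ⟨a, ha⟩
    rw [← map_smul, Submodule.mkQ_apply, Submodule.Quotient.mk_eq_zero, smul_eq_mul, mul_comm]
    exact Submodule.mem_colon.mp hr a ha
  · intro h
    obtain ⟨r, rfl⟩ := K.mkQ_surjective y
    refine ⟨r, Submodule.mem_colon.mpr fun a ha ↦ ?_, rfl⟩
    have := h ⟨a, ha⟩
    rwa [← map_smul, Submodule.mkQ_apply, Submodule.Quotient.mk_eq_zero, smul_eq_mul,
      mul_comm] at this

theorem H0_quotient_eq_map_saturation {R : Type*} [CommRing R] (m K : Ideal R) :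
    H0 m (R ⧸ K) = Submodule.map K.mkQ (K.saturation m) := by
  simp only [H0, Ideal.saturation, Submodule.map_iSup, map_mkQ_colon_eq_torsionBySet]

theorem moduleLength_eq_of_linearEquiv {R : Type*} [CommRing R] {M N : Type*} [AddCommGroup M]
    [Module R M] [AddCommGroup N] [Module R N] (e : M ≃ₗ[R] N) :
    moduleLength R M = moduleLength R N :=
  congrArg (·.unbotD 0) (Order.krullDim_eq_of_orderIso (Submodule.orderIsoMapComap e))

theorem moduleLength_map_mkQ {R : Type*} [CommRing R] {M : Type*} [AddCommGroup M] [Module R M]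
    (N L : Submodule R M) :
    moduleLength R (L.map N.mkQ) = moduleLength R (L ⧸ N.comap L.subtype) := by
  let f : L →ₗ[R] M ⧸ N := N.mkQ ∘ₗ L.subtype
  have hker : LinearMap.ker f = N.comap L.subtype := by
    rw [LinearMap.ker_comp, Submodule.ker_mkQ]
  have hrange : LinearMap.range f = L.map N.mkQ := by
    rw [LinearMap.range_comp, Submodule.range_subtype]
  rw [← hker, ← hrange]
  exact (moduleLength_eq_of_linearEquiv f.quotKerEquivRange).symm

theorem length_H0_eq_length_rees_general
    (R : Type*) [CommRing R] [IsNoetherianRing R] [IsLocalRing R]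
    (I : Ideal R) (x : R) (hreg : x ∈ nonZeroDivisors R)
    (hcolon : ∀ n : ℕ,
      (I ^ (n + 1)).colon (Ideal.span {x}) =
        I ^ n * (I.colon (Ideal.span {x})) + (⊥ : Ideal R).colon (Ideal.span {x}))
    (hsat : ∀ n : ℕ,
      (⨆ s : ℕ, (I ^ (n + 1)).colon ((maximalIdeal R ^ (s + 1) : Ideal R))) =
        (I ^ (n + 1)).colon (Ideal.span {x})) :
    ∀ n : ℕ,
      moduleLength R (H0 (maximalIdeal R) (R ⧸ I ^ (n + 1))) =
        moduleLength R
          (↥((I.colon (Ideal.span {x})) ^ (n + 1)) ⧸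
            (Submodule.comap ((I.colon (Ideal.span {x})) ^ (n + 1) :
              Submodule R R).subtype (I ^ (n + 1)))) := by
  intro n
  have hcolon' (n : ℕ) :
      (I ^ (n + 1)).colon (Ideal.span {x}) = I ^ n * I.colon (Ideal.span {x}) := by
    rw [hcolon, Ideal.bot_colon_span_singleton_of_mem_nonZeroDivisors hreg,
      ← Submodule.zero_eq_bot, add_zero]
  have hpow := Ideal.colon_span_singleton_pow_eq_pow_colon hcolon'
    (fun n ↦ Ideal.colon_span_singleton_colon_of_saturation_eq (hsat n)) n
  rw [H0_quotient_eq_map_saturation, Ideal.saturation, hsat n, ← hpow]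
  exact moduleLength_map_mkQ _ _

/-- under the saturation hypotheses,
`ℓ_R(H^0_m(R/I^(n+1))) = ℓ_R((I:x)^(n+1)/I^(n+1))` for all `n ≥ 0`. -/
theorem length_H0_eq_length_rees
    (R : Type*) [CommRing R] [IsNoetherianRing R] [IsLocalRing R]
    (I : Ideal R) (x : R) (hxm : x ∈ maximalIdeal R) (hreg : x ∈ nonZeroDivisors R)
    (hcolon : ∀ n : ℕ,
      (I ^ (n + 1)).colon (Ideal.span {x}) =
        I ^ n * (I.colon (Ideal.span {x})) + (⊥ : Ideal R).colon (Ideal.span {x}))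
    (hsat : ∀ n : ℕ,
      (⨆ s : ℕ, (I ^ (n + 1)).colon ((maximalIdeal R ^ (s + 1) : Ideal R))) =
        (I ^ (n + 1)).colon (Ideal.span {x})) :
    ∀ n : ℕ,
      moduleLength R (H0 (maximalIdeal R) (R ⧸ I ^ (n + 1))) =
        moduleLength R
          (↥((I.colon (Ideal.span {x})) ^ (n + 1)) ⧸
            (Submodule.comap ((I.colon (Ideal.span {x})) ^ (n + 1) :
              Submodule R R).subtype (I ^ (n + 1)))) :=
  length_H0_eq_length_rees_general R I x hreg hcolon hsat
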